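/- arXiv:2409.08834 — 6 statements merged into one kernel-verified Lean document; each statement's English description precedes it below -/
import Mathlib

section
/- Let ℓ: R₂ → ℝ be a linear functional on the degree-2 part of a real graded ring, expressed as ℓ = Σᵢ aᵢ ev_{pᵢ} + Σⱼ (zⱼ ev_{qⱼ} + conj(zⱼ) ev_{conj(qⱼ)}) where the aᵢ are real numbers, the pᵢ are real points, the zⱼ are complex numbers, and the qⱼ are nonreal points. If r₊ and r₋ denote the number of positive and negative numbers among the aᵢ and c is the number of conjugate pairs, then the associated real quadratic form φ_ℓ(f) = ℓ(f²) on R₁ has at most r₊ + c positive eigenvalues and at most r₋ + c negative eigenvalues. -/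
open Finset

/-- A point of `ℙⁿ` given by an affine representative `q : Fin (n+1) → ℂ` is real
iff it admits a representative which is a complex multiple of a real vector. -/
def IsRealPoint {n : ℕ} (q : Fin (n + 1) → ℂ) : Prop :=
  ∃ (w : ℂ) (v : Fin (n + 1) → ℝ), q = fun k => w * (v k : ℂ)

open Matrix Module

/-! Write `xᵀ M x = Σ aᵢ (pᵢ ⬝ x)² + Σ Re (2 zₗ (qₗ ⬝ x)²)`. If `μ² = -z` then
`Re (z w²) = Im (μ w)² - Re (μ w)²`, so on the subspace `W` cut out by `pᵢ ⬝ x = 0` for `aᵢ > 0`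
and by one real condition `Im (μₗ (qₗ ⬝ x)) = 0` for each pair, with `μₗ² = -2 zₗ`, the form is
`≤ 0`. As `W` has codimension at most `r₊ + c` and meets the span of the eigenvectors with
positive eigenvalues only in `0`, there are at most `r₊ + c` of them. Running the argument for
`ε xᵀ M x` with `ε = ±1` gives both bounds. -/

theorem Complex.re_mul_sq_le_im_sq {w μ : ℂ} (hμ : μ ^ 2 = -w) (v : ℂ) :
    (w * v ^ 2).re ≤ (μ * v).im ^ 2 := by
  have : w * v ^ 2 = -(μ * v) ^ 2 := by rw [mul_pow, hμ]; ring
  rw [this, Complex.neg_re, sq (μ * v), Complex.mul_re]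
  nlinarith [sq_nonneg (μ * v).re]

theorem Submodule.finrank_add_finrank_le_of_pos_of_nonpos {K E : Type*} [DivisionRing K]
    [AddCommGroup E] [Module K E] [FiniteDimensional K E] (Q : E → ℝ) {V W : Submodule K E}
    (hV : ∀ x ∈ V, x ≠ 0 → 0 < Q x) (hW : ∀ x ∈ W, Q x ≤ 0) :
    finrank K V + finrank K W ≤ finrank K E := by
  refine finrank_add_finrank_le_of_disjoint (disjoint_def.2 fun x hxV hxW => ?_)
  by_contra hx
  exact (hV x hxV hx).not_ge (hW x hxW)

theorem Matrix.IsHermitian.exists_finrank_eq_card_and_pos {n : Type*} [Fintype n]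
    [DecidableEq n] {A : Matrix n n ℝ} (hA : A.IsHermitian) (ε : ℝ) :
    ∃ V : Submodule ℝ (n → ℝ), finrank ℝ V = #{i | 0 < ε * hA.eigenvalues i} ∧
      ∀ x ∈ V, x ≠ 0 → 0 < ε * (x ⬝ᵥ A *ᵥ x) := by
  set S := ({i | 0 < ε * hA.eigenvalues i} : Finset n)
  set b : S → EuclideanSpace ℝ n := fun i => hA.eigenvectorBasis i
  have hb : Orthonormal ℝ b := hA.eigenvectorBasis.orthonormal.comp _ Subtype.val_injective
  refine ⟨(Submodule.span ℝ (Set.range b)).map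
    (WithLp.linearEquiv 2 ℝ (n → ℝ) : EuclideanSpace ℝ n →ₗ[ℝ] n → ℝ), ?_, ?_⟩
  · rw [LinearEquiv.finrank_map_eq, finrank_span_eq_card hb.linearIndependent, Fintype.card_coe]
  rintro _ ⟨y, hy, rfl⟩ hy0
  change WithLp.ofLp y ≠ 0 at hy0
  change 0 < ε * (WithLp.ofLp y ⬝ᵥ A *ᵥ WithLp.ofLp y)
  obtain ⟨c, rfl⟩ := (Submodule.mem_span_range_iff_exists_fun ℝ).1 hy
  have hAy : A *ᵥ WithLp.ofLp (∑ i, c i • b i) =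
      WithLp.ofLp (∑ i, (c i * hA.eigenvalues i) • b i) := by
    simp [b, mulVec_sum, mulVec_smul, hA.mulVec_eigenvectorBasis, smul_smul]
  have hQ : WithLp.ofLp (∑ i, c i • b i) ⬝ᵥ A *ᵥ WithLp.ofLp (∑ i, c i • b i) =
      ∑ i, c i * (c i * hA.eigenvalues i) := by
    rw [hAy, dotProduct_comm]
    exact hb.inner_sum _ _ _
  obtain ⟨i₀, hi₀⟩ : ∃ i, c i ≠ 0 := by
    by_contra! h
    simp [h] at hy0
  rw [hQ, mul_sum]
  refine sum_pos' (fun i _ => ?_) ⟨i₀, mem_univ _, ?_⟩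
  · nlinarith [(mem_filter.1 i.2).2, sq_nonneg (c i)]
  · nlinarith [(mem_filter.1 i₀.2).2, sq_pos_of_ne_zero hi₀]

theorem exists_submodule_finrank_le_and_smul_nonpos {E ι κ : Type*} [AddCommGroup E]
    [Module ℝ E] [FiniteDimensional ℝ E] [Fintype ι] [Fintype κ]
    (a : ι → ℝ) (f : ι → E →ₗ[ℝ] ℝ) (z : κ → ℂ) (g : κ → E →ₗ[ℝ] ℂ) (ε : ℝ) :
    ∃ W : Submodule ℝ E, finrank ℝ E ≤ finrank ℝ W + (#{i | 0 < ε * a i} + Fintype.card κ) ∧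
      ∀ x ∈ W, ε * (∑ i, a i * f i x ^ 2 + ∑ l, (z l * g l x ^ 2).re) ≤ 0 := by
  choose μ hμ using fun l => IsAlgClosed.exists_pow_nat_eq (-(ε * z l)) two_pos
  let G : E →ₗ[ℝ] ({i // 0 < ε * a i} → ℝ) × (κ → ℝ) :=
    (LinearMap.pi fun i : {i // 0 < ε * a i} => f i).prod
      (LinearMap.pi fun l => Complex.imLm ∘ₗ LinearMap.mulLeft ℝ (μ l) ∘ₗ g l)
  refine ⟨LinearMap.ker G, ?_, fun x hx => ?_⟩
  · have hrange := (LinearMap.range G).finrank_le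
    rw [finrank_prod, finrank_pi, finrank_pi, Fintype.card_subtype] at hrange
    have := G.finrank_range_add_finrank_ker
    omega
  · have hf : ∀ i, 0 < ε * a i → f i x = 0 := fun i hi =>
      congrFun (congrArg Prod.fst (LinearMap.mem_ker.1 hx)) ⟨i, hi⟩
    have hg : ∀ l, (μ l * g l x).im = 0 := fun l =>
      congrFun (congrArg Prod.snd (LinearMap.mem_ker.1 hx)) l
    rw [mul_add, mul_sum, mul_sum]
    refine add_nonpos (sum_nonpos fun i _ => ?_) (sum_nonpos fun l _ => ?_)
    · rcases lt_or_ge 0 (ε * a i) with hi | hi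
      · simp [hf i hi]
      · nlinarith [sq_nonneg (f i x)]
    · rw [← Complex.re_ofReal_mul, ← mul_assoc]
      simpa [hg l] using Complex.re_mul_sq_le_im_sq (hμ l) (g l x)

theorem dotProduct_mulVec_eq_sum_sq {m ι κ : Type*} [Fintype m] [Fintype ι] [Fintype κ]
    (a : ι → ℝ) (p : ι → m → ℝ) (z : κ → ℂ) (q : κ → m → ℂ) (M : Matrix m m ℝ)
    (hM : ∀ j k, M j k = (∑ i, a i * p i j * p i k) + ∑ l, (2 * (z l * q l j * q l k)).re)
    (x : m → ℝ) :
    x ⬝ᵥ M *ᵥ x =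
      ∑ i, a i * (∑ j, x j • p i j) ^ 2 + ∑ l, (2 * z l * (∑ j, x j • q l j) ^ 2).re := by
  simp only [dotProduct, mulVec, hM, sq, mul_sum, sum_mul, mul_add, add_mul, sum_add_distrib,
    Complex.re_sum, smul_eq_mul, Complex.real_smul]
  congr 1 <;> conv_rhs => rw [sum_comm]; enter [2, j]; rw [sum_comm]
  · exact sum_congr rfl fun j _ => sum_congr rfl fun k _ => sum_congr rfl fun i _ => by ring
  · refine sum_congr rfl fun j _ => sum_congr rfl fun k _ => sum_congr rfl fun l _ => ?_
    rw [← Complex.re_mul_ofReal, ← Complex.re_ofReal_mul]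
    ring_nf

theorem Matrix.IsHermitian.card_pos_eigenvalues_le {n ι κ : Type*} [Fintype n] [DecidableEq n]
    [Fintype ι] [Fintype κ] {A : Matrix n n ℝ} (hA : A.IsHermitian)
    (a : ι → ℝ) (f : ι → (n → ℝ) →ₗ[ℝ] ℝ) (z : κ → ℂ) (g : κ → (n → ℝ) →ₗ[ℝ] ℂ) (ε : ℝ)
    (hQ : ∀ x, x ⬝ᵥ A *ᵥ x = ∑ i, a i * f i x ^ 2 + ∑ l, (z l * g l x ^ 2).re) :
    #{i | 0 < ε * hA.eigenvalues i} ≤ #{i | 0 < ε * a i} + Fintype.card κ := by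
  obtain ⟨V, hVdim, hV⟩ := hA.exists_finrank_eq_card_and_pos ε
  obtain ⟨W, hWdim, hW⟩ := exists_submodule_finrank_le_and_smul_nonpos a f z g ε
  have := Submodule.finrank_add_finrank_le_of_pos_of_nonpos (fun x => ε * (x ⬝ᵥ A *ᵥ x)) hV
    (fun x hx => (hQ x).symm ▸ hW x hx)
  omega

/-- `M` is the Gram matrix of `φ_ℓ` in the coordinates `x₀, …, xₙ` of `R₁`,
as `ev_p (xⱼ xₖ) = p(j) p(k)`. -/
theorem stmt_0_general (n r c : ℕ)
    (a : Fin r → ℝ) (p : Fin r → Fin (n + 1) → ℝ)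
    (z : Fin c → ℂ) (q : Fin c → Fin (n + 1) → ℂ)
    (M : Matrix (Fin (n + 1)) (Fin (n + 1)) ℝ)
    (hMdef : ∀ j k, M j k =
      (∑ i, a i * p i j * p i k) + ∑ l, (2 * (z l * q l j * q l k)).re)
    (hM : M.IsHermitian) :
    (univ.filter fun i => 0 < hM.eigenvalues i).card ≤
      (univ.filter fun i => 0 < a i).card + c ∧
    (univ.filter fun i => hM.eigenvalues i < 0).card ≤
      (univ.filter fun i => a i < 0).card + c := by
  have hQ := dotProduct_mulVec_eq_sum_sq a p z q M hMdef
  have bound (ε : ℝ) := hM.card_pos_eigenvalues_le a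
    (fun i => Fintype.linearCombination ℝ (p i)) (fun l => 2 * z l)
    (fun l => Fintype.linearCombination ℝ (q l)) ε
    (by simpa only [Fintype.linearCombination_apply] using hQ)
  simpa only [one_mul, neg_one_mul, neg_pos, Fintype.card_fin] using
    And.intro (bound 1) (bound (-1))

/-- If the linear functional `ℓ` on the degree-2 part is
`ℓ = Σᵢ aᵢ ev_{pᵢ} + Σⱼ (zⱼ ev_{qⱼ} + conj(zⱼ) ev_{conj qⱼ})` with `aᵢ` real, `pᵢ`
real points, `zⱼ` complex and `qⱼ` nonreal points, then the symmetric matrix `M`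
of the quadratic form `φ_ℓ(f) = ℓ(f²)` on linear forms, whose entries are
`M j k = Σᵢ aᵢ pᵢ(j)pᵢ(k) + Σₗ 2 Re(zₗ qₗ(j) qₗ(k))`, has at most `r₊ + c`
positive eigenvalues and at most `r₋ + c` negative eigenvalues, where `r₊`
(resp. `r₋`) is the number of positive (resp. negative) `aᵢ`. -/
theorem stmt_0 (n r c : ℕ)
    (a : Fin r → ℝ) (p : Fin r → Fin (n + 1) → ℝ)
    (z : Fin c → ℂ) (q : Fin c → Fin (n + 1) → ℂ)
    (hq : ∀ l, ¬ IsRealPoint (q l))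
    (M : Matrix (Fin (n + 1)) (Fin (n + 1)) ℝ)
    (hMdef : ∀ j k, M j k =
      (∑ i, a i * p i j * p i k) + ∑ l, (2 * (z l * q l j * q l k)).re)
    (hM : M.IsHermitian) :
    (univ.filter fun i => 0 < hM.eigenvalues i).card ≤
      (univ.filter fun i => 0 < a i).card + c ∧
    (univ.filter fun i => hM.eigenvalues i < 0).card ≤
      (univ.filter fun i => a i < 0).card + c :=
  stmt_0_general n r c a p z q M hMdef hM
end

section
/- The signature of real symmetric matrices is subadditive: if A = B + C are real symmetric n×n matrices, then the number of positive eigenvalues of A is at most the sum of the numbers of positive eigenvalues of B and of C, and similarly for negative eigenvalues. -/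
open Finset Matrix
open scoped RealInnerProductSpace

/-! Write `p(M)` for the number of positive eigenvalues. If `A = B + C`, let `V` be the positive
eigenspace of `A` and `W` the nonpositive eigenspace of `B`: `V ⊓ W` has dimension at least
`p(A) - p(B)`, and the quadratic form of `C = A - B` is positive definite on it. A subspace on which
the form of `C` is positive definite meets the nonpositive eigenspace of `C` trivially, so its
dimension is at most `p(C)`. Negative eigenvalues are the positive ones of `-A = -B + -C`. -/

namespace OrthonormalBasis

variable {E ι : Type*} [NormedAddCommGroup E] [InnerProductSpace ℝ E] [Fintype ι]
  (b : OrthonormalBasis ι ℝ E)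

lemma repr_eq_zero_of_mem_orthogonal_span {s : Set ι} {x : E}
    (hx : x ∈ (Submodule.span ℝ (b '' s))ᗮ) {i : ι} (hi : i ∈ s) : b.repr x i = 0 := by
  rw [b.repr_apply_apply]
  exact Submodule.inner_right_of_mem_orthogonal
    (Submodule.subset_span (Set.mem_image_of_mem b hi)) hx

lemma card_le_card_add_finrank_orthogonal_span (p : ι → Prop) [DecidablePred p] :
    Fintype.card ι ≤ #{i | p i} + Module.finrank ℝ (Submodule.span ℝ (b '' {i | p i}))ᗮ := by
  classical
  have := b.toBasis.finiteDimensional_of_finite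
  have hspan : Module.finrank ℝ (Submodule.span ℝ (b '' {i | p i})) ≤ #{i | p i} := by
    have := (finrank_span_finset_le_card (R := ℝ) (({i | p i} : Finset ι).image b)).trans
      card_image_le
    rwa [coe_image, coe_filter_univ] at this
  have := (Submodule.span ℝ (b '' {i | p i})).finrank_add_finrank_orthogonal
  rw [Module.finrank_eq_card_basis b.toBasis] at this
  omega

section Eigenbasis

variable {T : E →ₗ[ℝ] E} {μ : ι → ℝ} (hT : ∀ i, T (b i) = μ i • b i)
include hT

lemma repr_map_apply (x : E) (i : ι) : b.repr (T x) i = μ i * b.repr x i := by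
  classical
  conv_lhs => rw [← b.sum_repr x]
  simp [hT, b.repr_self, Pi.single_apply, mul_comm]

lemma inner_map_self_eq_sum (x : E) : ⟪T x, x⟫ = ∑ i, μ i * b.repr x i ^ 2 := by
  rw [← b.repr.inner_map_map, PiLp.inner_apply]
  simp only [b.repr_map_apply hT, RCLike.inner_apply, conj_trivial]
  exact sum_congr rfl fun i _ => by ring

lemma inner_map_self_nonpos_of_mem_orthogonal_span {x : E}
    (hx : x ∈ (Submodule.span ℝ (b '' {i | 0 < μ i}))ᗮ) : ⟪T x, x⟫ ≤ 0 := by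
  rw [b.inner_map_self_eq_sum hT]
  refine sum_nonpos fun i _ => ?_
  rcases le_or_gt (μ i) 0 with hμ | hμ
  · exact mul_nonpos_of_nonpos_of_nonneg hμ (sq_nonneg _)
  · simp [b.repr_eq_zero_of_mem_orthogonal_span hx hμ]

lemma inner_map_self_pos_of_mem_orthogonal_span {x : E}
    (hx : x ∈ (Submodule.span ℝ (b '' {i | μ i ≤ 0}))ᗮ) (hx0 : x ≠ 0) : 0 < ⟪T x, x⟫ := by
  have hzero {i : ι} (hμ : μ i ≤ 0) : b.repr x i = 0 :=
    b.repr_eq_zero_of_mem_orthogonal_span hx hμ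
  obtain ⟨j, hj⟩ : ∃ j, b.repr x j ≠ 0 := by
    by_contra! h
    exact hx0 (b.repr.map_eq_zero_iff.1 (PiLp.ext h))
  have hμj : 0 < μ j := lt_of_not_ge fun hμ => hj (hzero hμ)
  rw [b.inner_map_self_eq_sum hT]
  refine sum_pos' (fun i _ => ?_) ⟨j, mem_univ j, by positivity⟩
  rcases le_or_gt (μ i) 0 with hμ | hμ
  · simp [hzero hμ]
  · positivity

lemma finrank_le_card_pos_of_inner_map_self_pos (V : Submodule ℝ E)
    (hV : ∀ x ∈ V, x ≠ 0 → 0 < ⟪T x, x⟫) :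
    Module.finrank ℝ V ≤ #{i | 0 < μ i} := by
  have := b.toBasis.finiteDimensional_of_finite
  have hdisj : Disjoint V (Submodule.span ℝ (b '' {i | 0 < μ i}))ᗮ := by
    refine Submodule.disjoint_def.2 fun x hxV hxW => ?_
    by_contra hx0
    exact (hV x hxV hx0).not_ge (b.inner_map_self_nonpos_of_mem_orthogonal_span hT hxW)
  have hVW := Submodule.finrank_add_finrank_le_of_disjoint hdisj
  have hW := b.card_le_card_add_finrank_orthogonal_span (0 < μ ·)
  rw [Module.finrank_eq_card_basis b.toBasis] at hVW
  omega

end Eigenbasis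

theorem card_pos_le_add {ι₁ ι₂ ι₃ : Type*} [Fintype ι₁] [Fintype ι₂] [Fintype ι₃]
    (b₁ : OrthonormalBasis ι₁ ℝ E) (b₂ : OrthonormalBasis ι₂ ℝ E) (b₃ : OrthonormalBasis ι₃ ℝ E)
    {T₁ T₂ T₃ : E →ₗ[ℝ] E} {μ₁ : ι₁ → ℝ} {μ₂ : ι₂ → ℝ} {μ₃ : ι₃ → ℝ}
    (hT₁ : ∀ i, T₁ (b₁ i) = μ₁ i • b₁ i) (hT₂ : ∀ i, T₂ (b₂ i) = μ₂ i • b₂ i)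
    (hT₃ : ∀ i, T₃ (b₃ i) = μ₃ i • b₃ i) (h : T₁ = T₂ + T₃) :
    #{i | 0 < μ₁ i} ≤ #{i | 0 < μ₂ i} + #{i | 0 < μ₃ i} := by
  have := b₁.toBasis.finiteDimensional_of_finite
  have hV := b₁.card_le_card_add_finrank_orthogonal_span (μ₁ · ≤ 0)
  have hW := b₂.card_le_card_add_finrank_orthogonal_span (0 < μ₂ ·)
  -- Eigenspaces are described as orthogonal complements, so that only the easy bound
  -- `finrank (span s) ≤ #s` is needed for their dimensions.
  set V := (Submodule.span ℝ (b₁ '' {i | μ₁ i ≤ 0}))ᗮ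
  set W := (Submodule.span ℝ (b₂ '' {i | 0 < μ₂ i}))ᗮ
  have hVW : Module.finrank ℝ ↥(V ⊓ W) ≤ #{i | 0 < μ₃ i} := by
    refine b₃.finrank_le_card_pos_of_inner_map_self_pos hT₃ _ fun x hx hx0 => ?_
    have h₁ := b₁.inner_map_self_pos_of_mem_orthogonal_span hT₁ hx.1 hx0
    have h₂ := b₂.inner_map_self_nonpos_of_mem_orthogonal_span hT₂ hx.2
    rw [h, LinearMap.add_apply, inner_add_left] at h₁
    linarith
  have hdim := Submodule.finrank_sup_add_finrank_inf_eq V W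
  have hsup := Submodule.finrank_le (V ⊔ W)
  have hsplit := card_filter_add_card_filter_not (s := univ) (0 < μ₁ ·)
  simp only [not_lt, card_univ] at hsplit
  rw [Module.finrank_eq_card_basis b₁.toBasis] at hsup
  have hcard := (Module.finrank_eq_card_basis b₁.toBasis).symm.trans
    (Module.finrank_eq_card_basis b₂.toBasis)
  omega

end OrthonormalBasis

lemma Matrix.IsHermitian.toEuclideanLin_eigenvectorBasis {𝕜 n : Type*} [RCLike 𝕜] [Fintype n]
    [DecidableEq n] {A : Matrix n n 𝕜} (hA : A.IsHermitian) (i : n) :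
    toEuclideanLin A (hA.eigenvectorBasis i) = hA.eigenvalues i • hA.eigenvectorBasis i := by
  ext j
  simpa using congrFun (hA.mulVec_eigenvectorBasis i) j

/-- Subadditivity of the signature: if `A = B + C` are real symmetric matrices,
then the number of positive eigenvalues of `A` is at most the sum of the numbers
of positive eigenvalues of `B` and of `C`, and similarly for negative eigenvalues. -/
theorem stmt_2 (n : ℕ) (A B C : Matrix (Fin n) (Fin n) ℝ)
    (hA : A.IsHermitian) (hB : B.IsHermitian) (hC : C.IsHermitian)
    (hsum : A = B + C) :
    (univ.filter fun i => 0 < hA.eigenvalues i).card ≤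
      (univ.filter fun i => 0 < hB.eigenvalues i).card +
      (univ.filter fun i => 0 < hC.eigenvalues i).card ∧
    (univ.filter fun i => hA.eigenvalues i < 0).card ≤
      (univ.filter fun i => hB.eigenvalues i < 0).card +
      (univ.filter fun i => hC.eigenvalues i < 0).card := by
  have hT : toEuclideanLin A = toEuclideanLin B + toEuclideanLin C := by rw [hsum, map_add]
  constructor
  · exact OrthonormalBasis.card_pos_le_add _ _ _ hA.toEuclideanLin_eigenvectorBasis
      hB.toEuclideanLin_eigenvectorBasis hC.toEuclideanLin_eigenvectorBasis hT
  · have hneg {M : Matrix (Fin n) (Fin n) ℝ} (hM : M.IsHermitian) (i : Fin n) :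
        (-toEuclideanLin M) (hM.eigenvectorBasis i) =
          (-hM.eigenvalues) i • hM.eigenvectorBasis i := by
      simp [hM.toEuclideanLin_eigenvectorBasis, neg_smul]
    simpa using OrthonormalBasis.card_pos_le_add _ _ _ (hneg hA) (hneg hB) (hneg hC)
      (by rw [hT, neg_add])
end

section
/- For d ≥ 3, the lattice squares P = [0,d]² and Q = [0,d−1]² satisfy: h = 0, #(2Q ∩ ℤ²) = (2d−1)², and #(interior(P+Q) ∩ ℤ²) = (2d−2)², so that #(2Q) + h > #(interior(P+Q)). -/
open Pointwise

/-- Embedding of the lattice `ℤ²` into `ℝ²`. -/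
def latPt (m : ℤ × ℤ) : ℝ × ℝ := ((m.1 : ℝ), (m.2 : ℝ))

/-- Number of lattice points contained in a subset of `ℝ²`. -/
noncomputable def latCount (A : Set (ℝ × ℝ)) : ℕ := {m : ℤ × ℤ | latPt m ∈ A}.ncard

/-- Translate of a subset of `ℝ²` by a lattice vector. -/
def latTrans (m : ℤ × ℤ) (A : Set (ℝ × ℝ)) : Set (ℝ × ℝ) := (fun v => v + latPt m) '' A

/-- Number of connected components of a subset of `ℝ²`. -/
noncomputable def ncomp (A : Set (ℝ × ℝ)) : ℕ :=
  ((fun x => connectedComponentIn A x) '' A).ncard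

/-- A square minus a box is path-connected when the box is narrower
than the square in both directions. -/
lemma sq_diff_pathConn (D a b c e : ℝ) (hD : 0 < D) (hb : b - a < D) (he : e - c < D) :
    IsPathConnected (Set.Icc ((0:ℝ),(0:ℝ)) ((D:ℝ),D) \ (Set.Icc a b ×ˢ Set.Icc c e)) := by
  set S := Set.Icc ((0:ℝ),(0:ℝ)) ((D:ℝ),D) \ (Set.Icc a b ×ˢ Set.Icc c e) with hS
  have hmemS : ∀ q : ℝ × ℝ, q ∈ S ↔
      ((0 ≤ q.1 ∧ q.1 ≤ D) ∧ (0 ≤ q.2 ∧ q.2 ≤ D)) ∧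
        (¬(a ≤ q.1 ∧ q.1 ≤ b) ∨ ¬(c ≤ q.2 ∧ q.2 ≤ e)) := by
    intro q
    simp only [hS, Set.mem_diff, Set.mem_Icc, Set.mem_prod, Prod.le_def, not_and_or]
    tauto
  obtain ⟨zx, hzx0, hzxD, hzxab⟩ : ∃ zx, 0 ≤ zx ∧ zx ≤ D ∧ ¬(a ≤ zx ∧ zx ≤ b) := by
    by_cases h : 0 < a
    · exact ⟨0, le_refl _, le_of_lt hD, fun hh => by linarith [hh.1]⟩
    · push_neg at h
      exact ⟨D, le_of_lt hD, le_refl _, fun hh => by linarith [hh.2]⟩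
  obtain ⟨zy, hzy0, hzyD, hzyce⟩ : ∃ zy, 0 ≤ zy ∧ zy ≤ D ∧ ¬(c ≤ zy ∧ zy ≤ e) := by
    by_cases h : 0 < c
    · exact ⟨0, le_refl _, le_of_lt hD, fun hh => by linarith [hh.1]⟩
    · push_neg at h
      exact ⟨D, le_of_lt hD, le_refl _, fun hh => by linarith [hh.2]⟩
  have vline : ∀ x y₁ y₂ : ℝ, 0 ≤ x → x ≤ D → ¬(a ≤ x ∧ x ≤ b) →
      0 ≤ y₁ → y₁ ≤ D → 0 ≤ y₂ → y₂ ≤ D → JoinedIn S (x, y₁) (x, y₂) := by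
    intro x y₁ y₂ hx0 hxD hxab hy₁0 hy₁D hy₂0 hy₂D
    have hconv : Convex ℝ (({x} : Set ℝ) ×ˢ Set.Icc (0:ℝ) D) :=
      (convex_singleton x).prod (convex_Icc 0 D)
    have hsub : (({x} : Set ℝ) ×ˢ Set.Icc (0:ℝ) D) ⊆ S := by
      rintro ⟨u, v⟩ ⟨hu, hv⟩
      simp only [Set.mem_singleton_iff] at hu
      subst hu
      rw [hmemS]
      exact ⟨⟨⟨hx0, hxD⟩, hv⟩, Or.inl hxab⟩
    have hm1 : (x, y₁) ∈ (({x} : Set ℝ) ×ˢ Set.Icc (0:ℝ) D) :=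
      ⟨Set.mem_singleton x, ⟨hy₁0, hy₁D⟩⟩
    have hm2 : (x, y₂) ∈ (({x} : Set ℝ) ×ˢ Set.Icc (0:ℝ) D) :=
      ⟨Set.mem_singleton x, ⟨hy₂0, hy₂D⟩⟩
    have hpc := hconv.isPathConnected ⟨(x, y₁), hm1⟩
    exact (hpc.joinedIn _ hm1 _ hm2).mono hsub
  have hline : ∀ y x₁ x₂ : ℝ, 0 ≤ y → y ≤ D → ¬(c ≤ y ∧ y ≤ e) →
      0 ≤ x₁ → x₁ ≤ D → 0 ≤ x₂ → x₂ ≤ D → JoinedIn S (x₁, y) (x₂, y) := by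
    intro y x₁ x₂ hy0 hyD hyce hx₁0 hx₁D hx₂0 hx₂D
    have hconv : Convex ℝ (Set.Icc (0:ℝ) D ×ˢ ({y} : Set ℝ)) :=
      (convex_Icc 0 D).prod (convex_singleton y)
    have hsub : (Set.Icc (0:ℝ) D ×ˢ ({y} : Set ℝ)) ⊆ S := by
      rintro ⟨u, v⟩ ⟨hu, hv⟩
      simp only [Set.mem_singleton_iff] at hv
      subst hv
      rw [hmemS]
      exact ⟨⟨hu, ⟨hy0, hyD⟩⟩, Or.inr hyce⟩
    have hm1 : (x₁, y) ∈ (Set.Icc (0:ℝ) D ×ˢ ({y} : Set ℝ)) :=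
      ⟨⟨hx₁0, hx₁D⟩, Set.mem_singleton y⟩
    have hm2 : (x₂, y) ∈ (Set.Icc (0:ℝ) D ×ˢ ({y} : Set ℝ)) :=
      ⟨⟨hx₂0, hx₂D⟩, Set.mem_singleton y⟩
    have hpc := hconv.isPathConnected ⟨(x₁, y), hm1⟩
    exact (hpc.joinedIn _ hm1 _ hm2).mono hsub
  refine ⟨(zx, zy), (hmemS _).mpr ⟨⟨⟨hzx0, hzxD⟩, ⟨hzy0, hzyD⟩⟩, Or.inl hzxab⟩, ?_⟩
  rintro ⟨px, py⟩ hp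
  rw [hmemS] at hp
  obtain ⟨⟨⟨hx0, hxD⟩, ⟨hy0, hyD⟩⟩, hor⟩ := hp
  rcases hor with h | h
  · have J1 : JoinedIn S (px, py) (px, zy) := vline px py zy hx0 hxD h hy0 hyD hzy0 hzyD
    have J2 : JoinedIn S (px, zy) (zx, zy) := hline zy px zx hzy0 hzyD hzyce hx0 hxD hzx0 hzxD
    exact (J1.trans J2).symm
  · have J1 : JoinedIn S (px, py) (zx, py) := hline py px zx hy0 hyD h hx0 hxD hzx0 hzxD
    have J2 : JoinedIn S (zx, py) (zx, zy) := vline zx py zy hzx0 hzxD hzxab hy0 hyD hzy0 hzyD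
    exact (J1.trans J2).symm

lemma ncomp_of_pathConn (A : Set (ℝ × ℝ)) (hA : IsPathConnected A) : ncomp A = 1 := by
  have hpre := hA.isConnected.isPreconnected
  obtain ⟨x0, hx0, -⟩ := hA
  have himg : (fun x => connectedComponentIn A x) '' A = {A} := by
    ext B
    simp only [Set.mem_image, Set.mem_singleton_iff]
    constructor
    · rintro ⟨x, hx, rfl⟩
      exact hpre.connectedComponentIn hx
    · rintro rfl
      exact ⟨x0, hx0, hpre.connectedComponentIn hx0⟩
  rw [ncomp, himg, Set.ncard_singleton]

/-- For `d ≥ 3` and the squares `P = [0,d]²`, `Q = [0,d−1]²`: the total reduced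
connected component count `h` is `0`, `#(2Q) = (2d−1)²`,
`#((P+Q)°) = (2d−2)²`, and `#(2Q) + h > #((P+Q)°)`. -/
theorem stmt_8 (d : ℕ) (hd : 3 ≤ d) (P Q : Set (ℝ × ℝ))
    (hPdef : P = Set.Icc ((0 : ℝ), (0 : ℝ)) ((d : ℝ), (d : ℝ)))
    (hQdef : Q = Set.Icc ((0 : ℝ), (0 : ℝ)) ((d : ℝ) - 1, (d : ℝ) - 1)) :
    (∑ᶠ m : ℤ × ℤ, (ncomp (P \ latTrans m Q) - 1)) = 0 ∧
    latCount ((2 : ℝ) • Q) = (2 * d - 1) ^ 2 ∧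
    latCount (interior (P + Q)) = (2 * d - 2) ^ 2 ∧
    latCount (interior (P + Q)) <
      latCount ((2 : ℝ) • Q) + ∑ᶠ m : ℤ × ℤ, (ncomp (P \ latTrans m Q) - 1) := by
  have hd3 : (3 : ℝ) ≤ (d : ℝ) := by exact_mod_cast hd
  -- translated Q as a product of intervals
  have hT : ∀ m : ℤ × ℤ, latTrans m Q =
      Set.Icc ((m.1 : ℝ)) ((m.1 : ℝ) + ((d : ℝ) - 1)) ×ˢ
        Set.Icc ((m.2 : ℝ)) ((m.2 : ℝ) + ((d : ℝ) - 1)) := by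
    intro m
    ext x
    simp only [latTrans, latPt, Set.mem_image, hQdef, Set.mem_Icc, Set.mem_prod, Prod.le_def]
    constructor
    · rintro ⟨v, ⟨⟨h1, h2⟩, h3, h4⟩, rfl⟩
      simp only [Prod.fst_add, Prod.snd_add]
      constructor <;> constructor <;> linarith
    · rintro ⟨⟨h1, h2⟩, h3, h4⟩
      refine ⟨(x.1 - (m.1 : ℝ), x.2 - (m.2 : ℝ)), ⟨⟨?_, ?_⟩, ?_, ?_⟩, ?_⟩
      · dsimp only; linarith
      · dsimp only; linarith
      · dsimp only; linarith
      · dsimp only; linarith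
      · ext <;> simp
  -- each summand is zero
  have hterm : ∀ m : ℤ × ℤ, ncomp (P \ latTrans m Q) - 1 = 0 := by
    intro m
    rw [hT, hPdef, ncomp_of_pathConn _
      (sq_diff_pathConn (d : ℝ) _ _ _ _ (by linarith) (by linarith) (by linarith))]
  have hsum : (∑ᶠ m : ℤ × ℤ, (ncomp (P \ latTrans m Q) - 1)) = 0 := by
    rw [finsum_congr hterm]
    exact finsum_zero
  -- 2 • Q
  have h2Q : (2 : ℝ) • Q = Set.Icc ((0 : ℝ), (0 : ℝ)) (2 * (d : ℝ) - 2, 2 * (d : ℝ) - 2) := by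
    rw [hQdef]
    ext x
    simp only [Set.mem_smul_set, Set.mem_Icc, Prod.le_def]
    constructor
    · rintro ⟨y, ⟨⟨h1, h2⟩, h3, h4⟩, rfl⟩
      simp only [Prod.smul_fst, Prod.smul_snd, smul_eq_mul]
      constructor <;> constructor <;> linarith
    · rintro ⟨⟨h1, h2⟩, h3, h4⟩
      refine ⟨(x.1 / 2, x.2 / 2), ⟨⟨?_, ?_⟩, ?_, ?_⟩, ?_⟩
      · dsimp only; linarith
      · dsimp only; linarith
      · dsimp only; linarith
      · dsimp only; linarith
      · ext <;> simp [smul_eq_mul] <;> ring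
  have hc2Q : latCount ((2 : ℝ) • Q) = (2 * d - 1) ^ 2 := by
    have hset : {m : ℤ × ℤ | latPt m ∈ (2 : ℝ) • Q} =
        ↑(Finset.Icc (0 : ℤ) (2 * (d : ℤ) - 2) ×ˢ Finset.Icc (0 : ℤ) (2 * (d : ℤ) - 2)) := by
      ext m
      simp only [h2Q, latPt, Set.mem_setOf_eq, Set.mem_Icc, Prod.le_def, Finset.coe_product,
        Set.mem_prod, Finset.mem_coe, Finset.mem_Icc]
      constructor
      · rintro ⟨⟨h1, h2⟩, h3, h4⟩
        have h3' : (m.1 : ℝ) ≤ ((2 * (d : ℤ) - 2 : ℤ) : ℝ) := by push_cast; linarith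
        have h4' : (m.2 : ℝ) ≤ ((2 * (d : ℤ) - 2 : ℤ) : ℝ) := by push_cast; linarith
        exact ⟨⟨by exact_mod_cast h1, by exact_mod_cast h3'⟩,
          by exact_mod_cast h2, by exact_mod_cast h4'⟩
      · rintro ⟨⟨h1, h2⟩, h3, h4⟩
        have h2' : (m.1 : ℝ) ≤ ((2 * (d : ℤ) - 2 : ℤ) : ℝ) := by exact_mod_cast h2
        have h4' : (m.2 : ℝ) ≤ ((2 * (d : ℤ) - 2 : ℤ) : ℝ) := by exact_mod_cast h4
        push_cast at h2' h4'
        exact ⟨⟨by exact_mod_cast h1, by exact_mod_cast h3⟩, by linarith, by linarith⟩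
    rw [latCount, hset, Set.ncard_coe_finset, Finset.card_product, Int.card_Icc]
    have h := hd
    have hh : (2 * (d : ℤ) - 2 + 1 - 0).toNat = 2 * d - 1 := by omega
    rw [hh, pow_two]
  -- P + Q
  have hPQ : P + Q = Set.Icc ((0 : ℝ), (0 : ℝ)) (2 * (d : ℝ) - 1, 2 * (d : ℝ) - 1) := by
    rw [hPdef, hQdef]
    ext x
    simp only [Set.mem_add, Set.mem_Icc, Prod.le_def]
    constructor
    · rintro ⟨p, ⟨⟨hp1, hp2⟩, hp3, hp4⟩, q, ⟨⟨hq1, hq2⟩, hq3, hq4⟩, rfl⟩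
      simp only [Prod.fst_add, Prod.snd_add]
      constructor <;> constructor <;> linarith
    · rintro ⟨⟨h1, h2⟩, h3, h4⟩
      rcases le_total x.1 (d : ℝ) with hx | hx <;> rcases le_total x.2 (d : ℝ) with hy | hy
      · refine ⟨(x.1, x.2), ⟨⟨?_, ?_⟩, ?_, ?_⟩, (0, 0), ⟨⟨?_, ?_⟩, ?_, ?_⟩, ?_⟩ <;>
          first
            | (ext <;> simp)
            | (dsimp only; linarith)
      · refine ⟨(x.1, (d : ℝ)), ⟨⟨?_, ?_⟩, ?_, ?_⟩, (0, x.2 - d), ⟨⟨?_, ?_⟩, ?_, ?_⟩, ?_⟩ <;>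
          first
            | (ext <;> simp)
            | (dsimp only; linarith)
      · refine ⟨((d : ℝ), x.2), ⟨⟨?_, ?_⟩, ?_, ?_⟩, (x.1 - d, 0), ⟨⟨?_, ?_⟩, ?_, ?_⟩, ?_⟩ <;>
          first
            | (ext <;> simp)
            | (dsimp only; linarith)
      · refine ⟨((d : ℝ), (d : ℝ)), ⟨⟨?_, ?_⟩, ?_, ?_⟩, (x.1 - d, x.2 - d),
          ⟨⟨?_, ?_⟩, ?_, ?_⟩, ?_⟩ <;>
          first
            | (ext <;> simp)
            | (dsimp only; linarith)
  have hint : interior (P + Q) =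
      Set.Ioo (0 : ℝ) (2 * (d : ℝ) - 1) ×ˢ Set.Ioo (0 : ℝ) (2 * (d : ℝ) - 1) := by
    rw [hPQ, Set.Icc_prod_eq, interior_prod_eq, interior_Icc]
  have hcPQ : latCount (interior (P + Q)) = (2 * d - 2) ^ 2 := by
    have hset : {m : ℤ × ℤ | latPt m ∈ interior (P + Q)} =
        ↑(Finset.Ioo (0 : ℤ) (2 * (d : ℤ) - 1) ×ˢ Finset.Ioo (0 : ℤ) (2 * (d : ℤ) - 1)) := by
      ext m
      simp only [hint, latPt, Set.mem_setOf_eq, Set.mem_prod, Set.mem_Ioo, Finset.coe_product,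
        Finset.mem_coe, Finset.mem_Ioo]
      constructor
      · rintro ⟨⟨h1, h2⟩, h3, h4⟩
        have h2' : (m.1 : ℝ) < ((2 * (d : ℤ) - 1 : ℤ) : ℝ) := by push_cast; linarith
        have h4' : (m.2 : ℝ) < ((2 * (d : ℤ) - 1 : ℤ) : ℝ) := by push_cast; linarith
        exact ⟨⟨by exact_mod_cast h1, by exact_mod_cast h2'⟩,
          by exact_mod_cast h3, by exact_mod_cast h4'⟩
      · rintro ⟨⟨h1, h2⟩, h3, h4⟩
        have h2' : (m.1 : ℝ) < ((2 * (d : ℤ) - 1 : ℤ) : ℝ) := by exact_mod_cast h2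
        have h4' : (m.2 : ℝ) < ((2 * (d : ℤ) - 1 : ℤ) : ℝ) := by exact_mod_cast h4
        push_cast at h2' h4'
        exact ⟨⟨by exact_mod_cast h1, by linarith⟩, by exact_mod_cast h3, by linarith⟩
    rw [latCount, hset, Set.ncard_coe_finset, Finset.card_product, Int.card_Ioo]
    have hh : (2 * (d : ℤ) - 1 - 0 - 1).toNat = 2 * d - 2 := by omega
    rw [hh, pow_two]
  refine ⟨hsum, hc2Q, hcPQ, ?_⟩
  rw [hsum, hc2Q, hcPQ, add_zero]
  exact Nat.pow_lt_pow_left (by omega) (by norm_num)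
end

section
/- Let P = 5Δ be the Veronese triangle of degree 5 and Q the Lawrence prism with vertices (0,0), (3,0), (2,1), (0,1). Then #(2Q ∩ ℤ²) = 18 and #(interior(P+Q) ∩ ℤ²) = 20, and there are exactly three lattice translates m + Q (m ∈ ℤ²) for which P \ (m+Q) is disconnected, each having exactly two connected components; hence #(2Q) + 3 > #(interior(P+Q)). -/
open Pointwise

/-- The standard triangle with vertices `(0,0)`, `(1,0)`, `(0,1)`. -/
noncomputable def stdTriangle : Set (ℝ × ℝ) :=
  convexHull ℝ {((0 : ℝ), (0 : ℝ)), (1, 0), (0, 1)}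

/-!
Every polygon involved is a trapezoid `{x ≥ 0, y ≥ 0, y ≤ h, x + y ≤ c}`, so the two lattice
counts are finite enumerations. For a translate `m + Q`, the set `P \ (m + Q)` is the union of
the four convex pieces in which the triangle `P` meets the open half-planes beyond the edges of
`m + Q`. Such a piece is nonempty iff it contains a vertex of `P`, so everything is decided at
the three vertices of `P`. Unless `m ∈ {(-1, 3), (0, 2), (0, 3)}`, one nonempty piece shares a
vertex of `P` with every other nonempty piece, so the union is connected. For those three `m`
only the pieces below and above `m + Q` are nonempty, and the horizontal strip of `m + Q`
separates them.
-/

def trapezoid (c h : ℝ) : Set (ℝ × ℝ) := {p | 0 ≤ p.1 ∧ 0 ≤ p.2 ∧ p.2 ≤ h ∧ p.1 + p.2 ≤ c}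

lemma convex_trapezoid (c h : ℝ) : Convex ℝ (trapezoid c h) := by
  simp only [trapezoid, Set.ofPred_and]
  exact (convex_halfSpace_ge (LinearMap.fst ℝ ℝ ℝ).isLinear 0).inter <|
    (convex_halfSpace_ge (LinearMap.snd ℝ ℝ ℝ).isLinear 0).inter <|
    (convex_halfSpace_le (LinearMap.snd ℝ ℝ ℝ).isLinear h).inter
    (convex_halfSpace_le (LinearMap.fst ℝ ℝ ℝ + LinearMap.snd ℝ ℝ ℝ).isLinear c)

lemma convexHull_eq_trapezoid {c h : ℝ} (hh : 0 < h) (hhc : h ≤ c) :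
    convexHull ℝ {((0 : ℝ), (0 : ℝ)), (c, 0), (c - h, h), (0, h)} = trapezoid c h := by
  set V : Set (ℝ × ℝ) := {(0, 0), (c, 0), (c - h, h), (0, h)}
  refine (convexHull_min ?_ (convex_trapezoid c h)).antisymm ?_
  · rintro p (rfl | rfl | rfl | rfl) <;> refine ⟨?_, ?_, ?_, ?_⟩ <;> dsimp only <;> linarith
  rintro ⟨x, y⟩ ⟨hx, hy, hyh, hxy⟩
  have hconv := convex_convexHull ℝ V
  have hvert : ∀ v ∈ V, v ∈ convexHull ℝ V := subset_convexHull ℝ V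
  -- the horizontal slice at height `y` runs from the left edge to the slanted edge
  have hleft : ((0 : ℝ), y) ∈ convexHull ℝ V := by
    refine hconv.segment_subset (hvert (0, 0) (by simp [V])) (hvert (0, h) (by simp [V])) ?_
    rw [← Prod.image_mk_segment_right, segment_eq_Icc hh.le]
    exact ⟨y, ⟨hy, hyh⟩, rfl⟩
  have hright : (c - y, y) ∈ convexHull ℝ V := by
    convert hconv.lineMap_mem (hvert (c, 0) (by simp [V])) (hvert (c - h, h) (by simp [V]))
      ⟨div_nonneg hy hh.le, (div_le_one hh).mpr hyh⟩ using 1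
    ext <;> simp [AffineMap.lineMap_apply, hh.ne', sub_eq_neg_add]
  refine hconv.segment_subset hleft hright ?_
  rw [← Prod.image_mk_segment_left, segment_eq_Icc (by linarith)]
  exact ⟨x, ⟨hx, by linarith⟩, rfl⟩

lemma smul_trapezoid {t : ℝ} (ht : 0 < t) (c h : ℝ) :
    t • trapezoid c h = trapezoid (t * c) (t * h) := by
  ext p
  simp only [Set.mem_smul_set_iff_inv_smul_mem₀ ht.ne', trapezoid, Set.mem_ofPred_eq,
    Prod.smul_fst, Prod.smul_snd, smul_eq_mul, ← mul_add, inv_mul_le_iff₀ ht]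
  simp [ht]

lemma trapezoid_add_trapezoid {c h c' h' : ℝ} (hh : 0 < h) (hhc : h ≤ c) (hh' : 0 < h')
    (hhc' : h' ≤ c') : trapezoid c h + trapezoid c' h' = trapezoid (c + c') (h + h') := by
  refine subset_antisymm ?_ ?_
  · rintro _ ⟨u, ⟨hu1, hu2, hu3, hu4⟩, v, ⟨hv1, hv2, hv3, hv4⟩, rfl⟩
    refine ⟨?_, ?_, ?_, ?_⟩ <;> simp only [Prod.fst_add, Prod.snd_add] <;> linarith
  · rw [← convexHull_eq_trapezoid (add_pos hh hh') (add_le_add hhc hhc')]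
    refine convexHull_min ?_ ((convex_trapezoid c h).add (convex_trapezoid c' h'))
    rintro p (rfl | rfl | rfl | rfl)
    · exact ⟨(0, 0), ⟨le_rfl, le_rfl, hh.le, by linarith⟩, (0, 0),
        ⟨le_rfl, le_rfl, hh'.le, by linarith⟩, by simp⟩
    · exact ⟨(c, 0), ⟨by linarith, le_rfl, hh.le, by simp⟩, (c', 0),
        ⟨by linarith, le_rfl, hh'.le, by simp⟩, by simp⟩
    · exact ⟨(c - h, h), ⟨by linarith, hh.le, le_rfl, by simp⟩, (c' - h', h'),
        ⟨by linarith, hh'.le, le_rfl, by simp⟩, by ext <;> simp; ring⟩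
    · exact ⟨(0, h), ⟨le_rfl, hh.le, le_rfl, by linarith⟩, (0, h'),
        ⟨le_rfl, hh'.le, le_rfl, by linarith⟩, by simp⟩

lemma IsOpenMap.interior_setOf_const_le {X : Type*} [TopologicalSpace X] {f : X → ℝ}
    (hf : IsOpenMap f) (hfc : Continuous f) (c : ℝ) : interior {x | c ≤ f x} = {x | c < f x} :=
  (hf.preimage_interior_eq_interior_preimage hfc (Set.Ici c)).symm.trans
    (congrArg (f ⁻¹' ·) interior_Ici)

lemma IsOpenMap.interior_setOf_le_const {X : Type*} [TopologicalSpace X] {f : X → ℝ}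
    (hf : IsOpenMap f) (hfc : Continuous f) (c : ℝ) : interior {x | f x ≤ c} = {x | f x < c} :=
  (hf.preimage_interior_eq_interior_preimage hfc (Set.Iic c)).symm.trans
    (congrArg (f ⁻¹' ·) interior_Iic)

lemma isOpenMap_fst_add_snd : IsOpenMap fun p : ℝ × ℝ => p.1 + p.2 :=
  (ContinuousLinearMap.fst ℝ ℝ ℝ + ContinuousLinearMap.snd ℝ ℝ ℝ).isOpenMap_of_ne_zero
    fun h => by simpa using congrArg (· (1, 0)) h

lemma interior_trapezoid (c h : ℝ) :
    interior (trapezoid c h) = {p | 0 < p.1 ∧ 0 < p.2 ∧ p.2 < h ∧ p.1 + p.2 < c} := by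
  simp only [trapezoid, Set.ofPred_and, interior_inter,
    isOpenMap_fst.interior_setOf_const_le continuous_fst,
    isOpenMap_snd.interior_setOf_const_le continuous_snd,
    isOpenMap_snd.interior_setOf_le_const continuous_snd,
    isOpenMap_fst_add_snd.interior_setOf_le_const (by fun_prop)]

def outerHalfPlanes (m : ℤ × ℤ) (c h : ℝ) : Set (Set (ℝ × ℝ)) :=
  {{p | p.1 < (m.1 : ℝ)}, {p | p.2 < (m.2 : ℝ)}, {p | (m.2 : ℝ) + h < p.2},
    {p | (m.1 : ℝ) + m.2 + c < p.1 + p.2}}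

lemma diff_latTrans_trapezoid (P : Set (ℝ × ℝ)) (m : ℤ × ℤ) (c h : ℝ) :
    P \ latTrans m (trapezoid c h) = ⋃ U ∈ outerHalfPlanes m c h, P ∩ U := by
  ext p
  simp only [latTrans, latPt, trapezoid, Set.image_add_right, Prod.neg_mk, Set.preimage_ofPred_eq,
    Prod.fst_add, Prod.snd_add, le_add_neg_iff_add_le, add_neg_le_iff_le_add, zero_add,
    Set.mem_sdiff, Set.mem_ofPred_eq, not_and, not_le, outerHalfPlanes, Set.mem_insert_iff,
    Set.mem_singleton_iff, Set.iUnion_iUnion_eq_or_left, Set.iUnion_iUnion_eq_left, Set.mem_union,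
    Set.mem_inter_iff]
  grind

lemma convex_and_convex_compl_of_mem_outerHalfPlanes {m : ℤ × ℤ} {c h : ℝ} {U : Set (ℝ × ℝ)}
    (hU : U ∈ outerHalfPlanes m c h) : Convex ℝ U ∧ Convex ℝ Uᶜ := by
  rcases hU with rfl | rfl | rfl | rfl <;> simp only [Set.compl_ofPred, not_lt]
  · exact ⟨convex_halfSpace_lt (LinearMap.fst ℝ ℝ ℝ).isLinear _,
      convex_halfSpace_ge (LinearMap.fst ℝ ℝ ℝ).isLinear _⟩
  · exact ⟨convex_halfSpace_lt (LinearMap.snd ℝ ℝ ℝ).isLinear _,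
      convex_halfSpace_ge (LinearMap.snd ℝ ℝ ℝ).isLinear _⟩
  · exact ⟨convex_halfSpace_gt (LinearMap.snd ℝ ℝ ℝ).isLinear _,
      convex_halfSpace_le (LinearMap.snd ℝ ℝ ℝ).isLinear _⟩
  · exact ⟨convex_halfSpace_gt (LinearMap.fst ℝ ℝ ℝ + LinearMap.snd ℝ ℝ ℝ).isLinear _,
      convex_halfSpace_le (LinearMap.fst ℝ ℝ ℝ + LinearMap.snd ℝ ℝ ℝ).isLinear _⟩

section Topology

variable {X : Type*} [TopologicalSpace X]

lemma isPreconnected_sUnion_of_hub {𝒜 : Set (Set X)} {H : Set X} (hH : H ∈ 𝒜)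
    (h𝒜 : ∀ A ∈ 𝒜, IsPreconnected A) (hmeet : ∀ A ∈ 𝒜, A.Nonempty → (A ∩ H).Nonempty) :
    IsPreconnected (⋃₀ 𝒜) := by
  rcases H.eq_empty_or_nonempty with rfl | ⟨x, hx⟩
  · convert isPreconnected_empty
    refine Set.sUnion_eq_empty.2 fun A hA => Set.not_nonempty_iff_eq_empty.1 fun hne => ?_
    simpa using hmeet A hA hne
  refine isPreconnected_of_forall x fun y ⟨A, hA, hy⟩ => ⟨A ∪ H, ?_, Or.inr hx, Or.inl hy,
    (h𝒜 A hA).union' (hmeet A hA ⟨y, hy⟩) (h𝒜 H hH)⟩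
  exact Set.union_subset (Set.subset_sUnion_of_mem hA) (Set.subset_sUnion_of_mem hH)

lemma connectedComponentIn_union_eq_left {A B U V : Set X} (hA : IsPreconnected A)
    (hU : IsOpen U) (hV : IsOpen V) (hUV : Disjoint U V) (hAU : A ⊆ U) (hBV : B ⊆ V) {x : X}
    (hx : x ∈ A) : connectedComponentIn (A ∪ B) x = A := by
  refine subset_antisymm ?_ (hA.subset_connectedComponentIn hx Set.subset_union_left)
  have hsub : connectedComponentIn (A ∪ B) x ⊆ U :=
    isPreconnected_connectedComponentIn.subset_left_of_subset_union hU hV hUV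
      ((connectedComponentIn_subset _ _).trans (Set.union_subset_union hAU hBV))
      ⟨x, mem_connectedComponentIn (Or.inl hx), hAU hx⟩
  intro y hy
  rcases connectedComponentIn_subset _ _ hy with hyA | hyB
  · exact hyA
  · exact absurd (hBV hyB) (hUV.notMem_of_mem_left (hsub hy))

end Topology

lemma ncomp_eq_one {A : Set (ℝ × ℝ)} (hA : IsConnected A) : ncomp A = 1 := by
  rw [ncomp, Set.image_congr fun x hx => hA.isPreconnected.connectedComponentIn hx,
    hA.nonempty.image_const, Set.ncard_singleton]

lemma ncomp_union_eq_two {A B U V : Set (ℝ × ℝ)} (hA : IsConnected A) (hB : IsConnected B)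
    (hU : IsOpen U) (hV : IsOpen V) (hUV : Disjoint U V) (hAU : A ⊆ U) (hBV : B ⊆ V) :
    ncomp (A ∪ B) = 2 := by
  have hcompA : ∀ x ∈ A, connectedComponentIn (A ∪ B) x = A := fun x hx =>
    connectedComponentIn_union_eq_left hA.isPreconnected hU hV hUV hAU hBV hx
  have hcompB : ∀ x ∈ B, connectedComponentIn (A ∪ B) x = B := fun x hx => by
    rw [Set.union_comm]
    exact connectedComponentIn_union_eq_left hB.isPreconnected hV hU hUV.symm hBV hAU hx
  rw [ncomp, Set.image_union, Set.image_congr hcompA, Set.image_congr hcompB,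
    hA.nonempty.image_const, hB.nonempty.image_const, Set.singleton_union, Set.ncard_pair]
  obtain ⟨x, hx⟩ := hA.nonempty
  exact fun hAB => hUV.notMem_of_mem_left (hAU hx) (hBV (hAB ▸ hx))

section ConvexHull

variable {E : Type*} [AddCommGroup E] [Module ℝ E]

lemma convexHull_inter_nonempty_iff {K U : Set E} (hU : Convex ℝ Uᶜ) :
    (convexHull ℝ K ∩ U).Nonempty ↔ (K ∩ U).Nonempty := by
  refine ⟨fun ⟨x, hxK, hxU⟩ => ?_, fun ⟨k, hkK, hkU⟩ => ⟨k, subset_convexHull ℝ K hkK, hkU⟩⟩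
  by_contra hKU
  exact convexHull_min (fun k hk hkU => hKU ⟨k, hk, hkU⟩) hU hxK hxU

variable [TopologicalSpace E] [IsTopologicalAddGroup E] [ContinuousSMul ℝ E]

lemma isConnected_biUnion_convexHull_inter {K V : Set E} {𝒰 : Set (Set E)}
    (h𝒰 : ∀ U ∈ 𝒰, Convex ℝ U ∧ Convex ℝ Uᶜ) (hV : V ∈ 𝒰) (hKV : (K ∩ V).Nonempty)
    (hmeet : ∀ U ∈ 𝒰, (K ∩ U).Nonempty → (K ∩ U ∩ V).Nonempty) :
    IsConnected (⋃ U ∈ 𝒰, convexHull ℝ K ∩ U) := by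
  obtain ⟨k, hkK, hkV⟩ := hKV
  refine ⟨⟨k, Set.mem_biUnion hV ⟨subset_convexHull ℝ K hkK, hkV⟩⟩, ?_⟩
  rw [← Set.sUnion_image]
  refine isPreconnected_sUnion_of_hub (Set.mem_image_of_mem _ hV) ?_ ?_
  · rintro _ ⟨U, hU, rfl⟩
    exact ((convex_convexHull ℝ K).inter (h𝒰 U hU).1).isPreconnected
  · rintro _ ⟨U, hU, rfl⟩ hne
    obtain ⟨x, ⟨hxK, hxU⟩, hxV⟩ :=
      hmeet U hU ((convexHull_inter_nonempty_iff (h𝒰 U hU).2).1 hne)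
    exact ⟨x, ⟨subset_convexHull ℝ K hxK, hxU⟩, subset_convexHull ℝ K hxK, hxV⟩

end ConvexHull

lemma ncomp_convexHull_diff_latTrans_trapezoid (m : ℤ × ℤ) :
    ncomp (convexHull ℝ {((0 : ℝ), (0 : ℝ)), (5, 0), (0, 5)} \ latTrans m (trapezoid 3 1)) =
      if m.1 ≤ 0 ∧ 1 ≤ m.2 ∧ m.2 ≤ 3 ∧ 2 ≤ m.1 + m.2 then 2 else 1 := by
  obtain ⟨a, b⟩ := m
  set K : Set (ℝ × ℝ) := {(0, 0), (5, 0), (0, 5)}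
  set 𝒰 := outerHalfPlanes (a, b) 3 1
  have hcut : ∀ U ∈ 𝒰, Convex ℝ U ∧ Convex ℝ Uᶜ := fun U hU =>
    convex_and_convex_compl_of_mem_outerHalfPlanes hU
  rw [diff_latTrans_trapezoid]
  split_ifs with hsplit
  · have hempty : ∀ U ∈ 𝒰, ¬(K ∩ U).Nonempty → convexHull ℝ K ∩ U = ∅ := fun U hU hKU =>
      Set.not_nonempty_iff_eq_empty.1 fun h =>
        hKU ((convexHull_inter_nonempty_iff (hcut U hU).2).1 h)
    have hconn : ∀ U ∈ 𝒰, (K ∩ U).Nonempty → IsConnected (convexHull ℝ K ∩ U) :=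
      fun U hU ⟨k, hkK, hkU⟩ => ⟨⟨k, subset_convexHull ℝ K hkK, hkU⟩,
        ((convex_convexHull ℝ K).inter (hcut U hU).1).isPreconnected⟩
    have hdisj : Disjoint {p : ℝ × ℝ | p.2 < b} {p | (b : ℝ) + 1 < p.2} :=
      Set.disjoint_left.2 fun p (hp : p.2 < b) (hq : (b : ℝ) + 1 < p.2) => by linarith
    simp only [outerHalfPlanes, Set.biUnion_insert, Set.biUnion_singleton]
    rw [hempty {p | p.1 < (a : ℝ)} ?_ ?_, hempty {p | (a : ℝ) + b + 3 < p.1 + p.2} ?_ ?_,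
      Set.empty_union, Set.union_empty]
    refine ncomp_union_eq_two (hconn {p | p.2 < (b : ℝ)} ?_ ?_)
      (hconn {p | (b : ℝ) + 1 < p.2} ?_ ?_) (isOpen_lt continuous_snd continuous_const)
      (isOpen_lt continuous_const continuous_snd) hdisj Set.inter_subset_right
      Set.inter_subset_right
    -- each remaining goal is a condition on the vertices, i.e. on the integers `a`, `b`
    all_goals
      simp [K, 𝒰, Set.Nonempty, outerHalfPlanes, or_and_right, exists_or] <;> norm_cast <;> omega
  · have hub : ∀ V ∈ 𝒰, (K ∩ V).Nonempty →
        (∀ U ∈ 𝒰, (K ∩ U).Nonempty → (K ∩ U ∩ V).Nonempty) →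
        IsConnected (⋃ U ∈ 𝒰, convexHull ℝ K ∩ U) := fun V hV =>
      isConnected_biUnion_convexHull_inter hcut hV
    apply ncomp_eq_one
    rcases (by omega : b ≤ 0 ∨ 4 ≤ b ∨ 1 ≤ a ∨ a + b ≤ 1) with h | h | h | h <;>
    [apply hub {p | (b : ℝ) + 1 < p.2}; apply hub {p | p.2 < (b : ℝ)};
      apply hub {p | p.1 < (a : ℝ)}; apply hub {p | (a : ℝ) + b + 3 < p.1 + p.2}] <;>
    simp [K, 𝒰, Set.Nonempty, outerHalfPlanes, or_and_right, exists_or] <;> norm_cast <;> omega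

lemma smul_stdTriangle (t : ℝ) :
    t • stdTriangle = convexHull ℝ {((0 : ℝ), (0 : ℝ)), (t, 0), (0, t)} := by
  simp [stdTriangle, ← convexHull_smul, Set.smul_set_insert]

lemma convexHull_triangle_eq_trapezoid {t : ℝ} (ht : 0 < t) :
    convexHull ℝ {((0 : ℝ), (0 : ℝ)), (t, 0), (0, t)} = trapezoid t t := by
  simpa using convexHull_eq_trapezoid ht le_rfl

lemma latCount_trapezoid_six_two : latCount (trapezoid 6 2) = 18 := by
  have : {m : ℤ × ℤ | latPt m ∈ trapezoid 6 2} =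
      ↑((Finset.Icc 0 6 ×ˢ Finset.Icc 0 2).filter fun m : ℤ × ℤ => m.1 + m.2 ≤ 6) := by
    ext ⟨a, b⟩
    simp only [trapezoid, latPt, Set.mem_ofPred_eq, Int.cast_nonneg_iff, Finset.coe_filter,
      Finset.mem_product, Finset.mem_Icc]
    norm_cast
    omega
  rw [latCount, this, Set.ncard_coe_finset]
  rfl

lemma latCount_interior_trapezoid_eight_six : latCount (interior (trapezoid 8 6)) = 20 := by
  have : {m : ℤ × ℤ | latPt m ∈ interior (trapezoid 8 6)} =
      ↑((Finset.Icc 1 6 ×ˢ Finset.Icc 1 5).filter fun m : ℤ × ℤ => m.1 + m.2 ≤ 7) := by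
    ext ⟨a, b⟩
    simp only [interior_trapezoid, latPt, Set.mem_ofPred_eq, Int.cast_pos, Finset.coe_filter,
      Finset.mem_product, Finset.mem_Icc]
    norm_cast
    omega
  rw [latCount, this, Set.ncard_coe_finset]
  rfl

/-- For `P = 5Δ` and `Q` the Lawrence prism with vertices
`(0,0), (3,0), (2,1), (0,1)`: `#(2Q) = 18`, `#((P+Q)°) = 20`, there are exactly
three lattice translates `m + Q` for which `P \ (m+Q)` is disconnected, each
with exactly two connected components; hence `18 + 3 > 20`. -/
theorem stmt_12 (P Q : Set (ℝ × ℝ))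
    (hPdef : P = (5 : ℝ) • stdTriangle)
    (hQdef : Q = convexHull ℝ {((0 : ℝ), (0 : ℝ)), (3, 0), (2, 1), (0, 1)}) :
    latCount ((2 : ℝ) • Q) = 18 ∧
    latCount (interior (P + Q)) = 20 ∧
    {m : ℤ × ℤ | 2 ≤ ncomp (P \ latTrans m Q)}.ncard = 3 ∧
    (∀ m : ℤ × ℤ, 2 ≤ ncomp (P \ latTrans m Q) → ncomp (P \ latTrans m Q) = 2) ∧
    18 + 3 > 20 := by
  have hP : P = convexHull ℝ {((0 : ℝ), (0 : ℝ)), (5, 0), (0, 5)} := by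
    rw [hPdef, smul_stdTriangle]
  have hQ : Q = trapezoid 3 1 := by
    rw [hQdef, ← convexHull_eq_trapezoid one_pos (by norm_num)]
    norm_num
  have hsplit : {m : ℤ × ℤ | 2 ≤ ncomp (P \ latTrans m Q)} =
      ↑({(-1, 3), (0, 2), (0, 3)} : Finset (ℤ × ℤ)) := by
    ext ⟨a, b⟩
    simp only [hP, hQ, ncomp_convexHull_diff_latTrans_trapezoid]
    simp only [Set.mem_ofPred_eq, Finset.coe_insert, Finset.coe_singleton, Set.mem_insert_iff,
      Set.mem_singleton_iff, Prod.mk.injEq]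
    split_ifs <;> omega
  refine ⟨?_, ?_, ?_, fun m => ?_, by norm_num⟩
  · rw [hQ, smul_trapezoid two_pos]
    norm_num [latCount_trapezoid_six_two]
  · rw [hP, hQ, convexHull_triangle_eq_trapezoid (by norm_num),
      trapezoid_add_trapezoid (by norm_num) le_rfl one_pos (by norm_num)]
    norm_num [latCount_interior_trapezoid_eight_six]
  · rw [hsplit, Set.ncard_coe_finset]
    rfl
  · rw [hP, hQ, ncomp_convexHull_diff_latTrans_trapezoid]
    split_ifs <;> omega
end

section
/- For lattice trapezoids T(d,m) = {(x,y) ∈ ℝ² : x ≥ 0, 0 ≤ y ≤ d−m, x+y ≤ d} with 0 ≤ m ≤ d: the number of lattice points in 2·T(d,m) equals C(2d+2, 2) − C(2m+1, 2), and the number of interior lattice points of T(d₁,m₁) + T(d₂,m₂) equals C(d₁+d₂−1, 2) − C(m₁+m₂, 2) (assuming m₁ + m₂ ≤ d₁ + d₂ and parameters nonnegative with mᵢ ≤ dᵢ). -/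
open Pointwise

/-- The lattice trapezoid `T(d,m) = {(x,y) : x ≥ 0, 0 ≤ y ≤ d−m, x+y ≤ d}`. -/
def trap (d m : ℕ) : Set (ℝ × ℝ) :=
  {v | 0 ≤ v.1 ∧ 0 ≤ v.2 ∧ v.2 ≤ (d : ℝ) - (m : ℝ) ∧ v.1 + v.2 ≤ (d : ℝ)}


lemma choose_step (n : ℕ) : (n+1).choose 2 = n.choose 2 + n := by
  rw [Nat.choose_succ_succ]; simp [Nat.choose_one_right, Nat.add_comm]

lemma sum_helper (k M : ℕ) : ∑ j ∈ Finset.range k, (M + j) + M.choose 2 = (M + k).choose 2 := by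
  induction k with
  | zero => simp
  | succ k ih =>
    rw [Finset.sum_range_succ, show M + (k+1) = (M+k)+1 from rfl, choose_step (M+k)]
    omega

-- closed trapezoid count, ℕ version
lemma countA (D M : ℕ) (h : M ≤ D) :
    ((Finset.range (D+1) ×ˢ Finset.range (D+1)).filter
      (fun p : ℕ × ℕ => p.2 + M ≤ D ∧ p.1 + p.2 ≤ D)).card
    = (D+2).choose 2 - (M+1).choose 2 := by
  have hset : (Finset.range (D+1) ×ˢ Finset.range (D+1)).filter
      (fun p : ℕ × ℕ => p.2 + M ≤ D ∧ p.1 + p.2 ≤ D)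
      = (Finset.range (D+1-M)).biUnion
          (fun j => (Finset.range (D+1-j)).image (fun i => (i, j))) := by
    ext ⟨a, b⟩
    simp only [Finset.mem_filter, Finset.mem_product, Finset.mem_range, Finset.mem_biUnion,
      Finset.mem_image, Prod.mk.injEq]
    constructor
    · rintro ⟨⟨ha, hb⟩, h1, h2⟩; exact ⟨b, by omega, a, by omega, rfl, rfl⟩
    · rintro ⟨j, hj, i, hi, rfl, rfl⟩; omega
  rw [hset, Finset.card_biUnion]
  · have : ∀ j ∈ Finset.range (D+1-M),
        ((Finset.range (D+1-j)).image (fun i => (i, j))).card = D+1-j := by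
      intro j _
      rw [Finset.card_image_of_injective _ (fun a b hab => (Prod.mk.injEq _ _ _ _).mp hab |>.1)]
      simp
    rw [Finset.sum_congr rfl this]
    have hre := Finset.sum_range_reflect (fun j => M + 1 + j) (D+1-M)
    have : ∀ j ∈ Finset.range (D+1-M), D + 1 - j = M + 1 + (D+1-M - 1 - j) := by
      intro j hj; simp at hj; omega
    rw [Finset.sum_congr rfl this, hre]
    have hs := sum_helper (D+1-M) (M+1)
    rw [show M+1+(D+1-M) = D+2 by omega] at hs
    omega
  · intro x hx y hy hxy
    simp only [Finset.disjoint_left, Finset.mem_image, Finset.mem_range]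
    rintro ⟨a,b⟩ ⟨i, hi, h1⟩ ⟨i', hi', h2⟩
    apply hxy
    rw [← h1] at h2
    exact ((Prod.mk.injEq _ _ _ _).mp h2).2.symm ▸ rfl

-- interior trapezoid count, ℕ version
lemma countB (D M : ℕ) (h : M ≤ D) :
    ((Finset.range (D+1) ×ˢ Finset.range (D+1)).filter
      (fun p : ℕ × ℕ => 1 ≤ p.1 ∧ 1 ≤ p.2 ∧ p.2 + M + 1 ≤ D ∧ p.1 + p.2 + 1 ≤ D)).card
    = (D-1).choose 2 - M.choose 2 := by
  have hset : (Finset.range (D+1) ×ˢ Finset.range (D+1)).filter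
      (fun p : ℕ × ℕ => 1 ≤ p.1 ∧ 1 ≤ p.2 ∧ p.2 + M + 1 ≤ D ∧ p.1 + p.2 + 1 ≤ D)
      = (Finset.range (D-M-1)).biUnion
          (fun j => (Finset.range (D-2-j)).image (fun i => (i+1, j+1))) := by
    ext ⟨a, b⟩
    simp only [Finset.mem_filter, Finset.mem_product, Finset.mem_range, Finset.mem_biUnion,
      Finset.mem_image, Prod.mk.injEq]
    constructor
    · rintro ⟨⟨ha, hb⟩, h1, h2, h3, h4⟩
      exact ⟨b-1, by omega, a-1, by omega, by omega, by omega⟩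
    · rintro ⟨j, hj, i, hi, rfl, rfl⟩; omega
  rw [hset, Finset.card_biUnion]
  · have : ∀ j ∈ Finset.range (D-M-1),
        ((Finset.range (D-2-j)).image (fun i => (i+1, j+1))).card = D-2-j := by
      intro j _
      rw [Finset.card_image_of_injective _ (fun a b hab => by
        have := (Prod.mk.injEq _ _ _ _).mp hab; omega)]
      simp
    rw [Finset.sum_congr rfl this]
    have hre := Finset.sum_range_reflect (fun j => M + j) (D-M-1)
    have : ∀ j ∈ Finset.range (D-M-1), D - 2 - j = M + (D-M-1 - 1 - j) := by
      intro j hj; simp at hj; omega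
    rw [Finset.sum_congr rfl this, hre]
    have hs := sum_helper (D-M-1) M
    rcases Nat.eq_or_lt_of_le h with rfl | hlt
    · simp
      have := Nat.choose_le_choose 2 (show M-1 ≤ M by omega)
      omega
    · rw [show M+(D-M-1) = D-1 by omega] at hs
      omega
  · intro x hx y hy hxy
    simp only [Finset.disjoint_left, Finset.mem_image, Finset.mem_range]
    rintro ⟨a,b⟩ ⟨i, hi, h1⟩ ⟨i', hi', h2⟩
    apply hxy
    rw [← h1] at h2
    have := (Prod.mk.injEq _ _ _ _).mp h2
    omega

lemma smul_trap (d m : ℕ) : (2:ℝ) • trap d m = trap (2*d) (2*m) := by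
  ext v
  simp only [Set.mem_smul_set, trap, Set.mem_setOf_eq]
  constructor
  · rintro ⟨w, ⟨h1, h2, h3, h4⟩, rfl⟩
    simp only [Prod.smul_fst, Prod.smul_snd, smul_eq_mul]
    push_cast
    refine ⟨by linarith, by linarith, by linarith, by linarith⟩
  · rintro ⟨h1, h2, h3, h4⟩
    push_cast at h3 h4
    refine ⟨(v.1/2, v.2/2), ⟨by linarith, by linarith, by linarith, by linarith⟩, ?_⟩
    ext <;> simp <;> ring

lemma trap_add (d₁ m₁ d₂ m₂ : ℕ) (h1 : m₁ ≤ d₁) (h2 : m₂ ≤ d₂) :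
    trap d₁ m₁ + trap d₂ m₂ = trap (d₁+d₂) (m₁+m₂) := by
  have hd1 : (m₁:ℝ) ≤ d₁ := by exact_mod_cast h1
  have hd2 : (m₂:ℝ) ≤ d₂ := by exact_mod_cast h2
  ext v
  simp only [Set.mem_add, trap, Set.mem_setOf_eq]
  constructor
  · rintro ⟨a, ⟨a1, a2, a3, a4⟩, b, ⟨b1, b2, b3, b4⟩, rfl⟩
    simp only [Prod.fst_add, Prod.snd_add]
    push_cast
    refine ⟨by linarith, by linarith, by linarith, by linarith⟩
  · rintro ⟨hx, hy, h3, h4⟩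
    push_cast at h3 h4
    obtain ⟨y₁, hy0, hy1, hy2, hy3⟩ :
        ∃ y₁ : ℝ, 0 ≤ y₁ ∧ y₁ ≤ (d₁:ℝ) - m₁ ∧ y₁ ≤ v.2 ∧ v.2 - y₁ ≤ (d₂:ℝ) - m₂ := by
      rcases le_total v.2 ((d₁:ℝ) - m₁) with hc | hc
      · exact ⟨v.2, hy, hc, le_refl _, by linarith⟩
      · exact ⟨(d₁:ℝ) - m₁, by linarith, le_refl _, hc, by linarith⟩
    obtain ⟨x₁, hx0, hx1, hx2, hx3⟩ :
        ∃ x₁ : ℝ, 0 ≤ x₁ ∧ x₁ ≤ v.1 ∧ x₁ + y₁ ≤ (d₁:ℝ) ∧ v.1 - x₁ + (v.2 - y₁) ≤ (d₂:ℝ) := by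
      rcases le_total v.1 ((d₁:ℝ) - y₁) with hc | hc
      · exact ⟨v.1, hx, le_refl _, by linarith, by linarith⟩
      · exact ⟨(d₁:ℝ) - y₁, by linarith, by linarith, by linarith, by linarith⟩
    refine ⟨(x₁, y₁), ⟨hx0, hy0, hy1, hx2⟩,
      (v.1 - x₁, v.2 - y₁), ⟨?_, ?_, ?_, ?_⟩, by ext <;> simp⟩ <;> dsimp only <;> linarith

lemma interior_trap (D M : ℕ) :
    interior (trap D M) =
      {v : ℝ × ℝ | 0 < v.1 ∧ 0 < v.2 ∧ v.2 < (D:ℝ) - M ∧ v.1 + v.2 < (D:ℝ)} := by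
  apply Set.Subset.antisymm
  · intro v hv
    rw [mem_interior_iff_mem_nhds, Metric.mem_nhds_iff] at hv
    obtain ⟨ε, hε, hball⟩ := hv
    have hmem : ∀ w : ℝ × ℝ, dist w v < ε → w ∈ trap D M := fun w hw => hball hw
    have key : ∀ a b : ℝ, |a| < ε → |b| < ε → (v.1 + a, v.2 + b) ∈ trap D M := by
      intro a b ha hb
      apply hmem
      rw [Prod.dist_eq, Real.dist_eq, Real.dist_eq]
      simp only [add_sub_cancel_left]
      exact max_lt ha hb
    have habs : |(-(ε/2))| < ε := by rw [abs_neg, abs_of_pos (by linarith)]; linarith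
    have habs' : |(ε/2)| < ε := by rw [abs_of_pos (by linarith)]; linarith
    have h0 : |(0:ℝ)| < ε := by simpa using hε
    have p1 := key (-(ε/2)) 0 habs h0
    have p2 := key 0 (-(ε/2)) h0 habs
    have p3 := key 0 (ε/2) h0 habs'
    simp only [trap, Set.mem_setOf_eq, add_zero] at p1 p2 p3
    obtain ⟨q1, _, _, _⟩ := p1
    obtain ⟨_, q2, _, _⟩ := p2
    obtain ⟨_, _, q3, q4⟩ := p3
    exact ⟨by linarith, by linarith, by linarith, by linarith⟩
  · apply interior_maximal
    · rintro v ⟨h1, h2, h3, h4⟩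
      exact ⟨le_of_lt h1, le_of_lt h2, le_of_lt h3, le_of_lt h4⟩
    · have : {v : ℝ × ℝ | 0 < v.1 ∧ 0 < v.2 ∧ v.2 < (D:ℝ) - M ∧ v.1 + v.2 < (D:ℝ)}
          = {v : ℝ × ℝ | 0 < v.1} ∩ ({v | 0 < v.2} ∩ ({v | v.2 < (D:ℝ) - M} ∩ {v | v.1 + v.2 < (D:ℝ)})) := rfl
      rw [this]
      exact (isOpen_lt continuous_const continuous_fst).inter
        ((isOpen_lt continuous_const continuous_snd).inter
          ((isOpen_lt continuous_snd continuous_const).inter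
            (isOpen_lt (continuous_fst.add continuous_snd) continuous_const)))

lemma gInj : Function.Injective (fun p : ℕ × ℕ => ((p.1 : ℤ), (p.2 : ℤ))) := by
  rintro ⟨a, b⟩ ⟨c, d⟩ h
  simp only [Prod.mk.injEq, Nat.cast_inj] at h
  exact Prod.ext h.1 h.2

lemma latCount_trap (D M : ℕ) (h : M ≤ D) :
    latCount (trap D M) =
      ((Finset.range (D+1) ×ˢ Finset.range (D+1)).filter
        (fun p : ℕ × ℕ => p.2 + M ≤ D ∧ p.1 + p.2 ≤ D)).card := by
  rw [latCount]
  have hset : {m : ℤ × ℤ | latPt m ∈ trap D M} =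
      ↑(((Finset.range (D+1) ×ˢ Finset.range (D+1)).filter
        (fun p : ℕ × ℕ => p.2 + M ≤ D ∧ p.1 + p.2 ≤ D)).image
        (fun p : ℕ × ℕ => ((p.1 : ℤ), (p.2 : ℤ)))) := by
    ext ⟨x, y⟩
    simp only [Set.mem_setOf_eq, latPt, trap, Finset.coe_image, Set.mem_image,
      Finset.mem_coe, Finset.mem_filter, Finset.mem_product, Finset.mem_range]
    constructor
    · rintro ⟨hx, hy, h3, h4⟩
      have hx' : (0:ℤ) ≤ x := by exact_mod_cast hx
      have hy' : (0:ℤ) ≤ y := by exact_mod_cast hy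
      have h3' : y + (M:ℤ) ≤ D := by exact_mod_cast (by linarith : (y:ℝ) + M ≤ D)
      have h4' : x + y ≤ (D:ℤ) := by exact_mod_cast h4
      refine ⟨(x.toNat, y.toNat), ⟨⟨by omega, by omega⟩, by omega, by omega⟩, ?_⟩
      simp only [Prod.mk.injEq]
      constructor <;> [rw [Int.toNat_of_nonneg hx']; rw [Int.toNat_of_nonneg hy']]
    · rintro ⟨⟨a, b⟩, ⟨⟨ha, hb⟩, hc, hd⟩, heq⟩
      dsimp only at *
      simp only [Prod.mk.injEq] at heq
      obtain ⟨rfl, rfl⟩ := heq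
      have hc' : (b:ℝ) + M ≤ D := by exact_mod_cast hc
      have hd' : (a:ℝ) + b ≤ D := by exact_mod_cast hd
      refine ⟨?_, ?_, ?_, ?_⟩ <;> push_cast <;> first | positivity | linarith
  rw [hset, Set.ncard_coe_finset, Finset.card_image_of_injective _ gInj]

lemma latCount_interior_trap (D M : ℕ) (h : M ≤ D)
    (hint : interior (trap D M) =
      {v : ℝ × ℝ | 0 < v.1 ∧ 0 < v.2 ∧ v.2 < (D:ℝ) - M ∧ v.1 + v.2 < (D:ℝ)}) :
    latCount (interior (trap D M)) =
      ((Finset.range (D+1) ×ˢ Finset.range (D+1)).filter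
        (fun p : ℕ × ℕ => 1 ≤ p.1 ∧ 1 ≤ p.2 ∧ p.2 + M + 1 ≤ D ∧ p.1 + p.2 + 1 ≤ D)).card := by
  rw [latCount]
  have hset : {m : ℤ × ℤ | latPt m ∈ interior (trap D M)} =
      ↑(((Finset.range (D+1) ×ˢ Finset.range (D+1)).filter
        (fun p : ℕ × ℕ => 1 ≤ p.1 ∧ 1 ≤ p.2 ∧ p.2 + M + 1 ≤ D ∧ p.1 + p.2 + 1 ≤ D)).image
        (fun p : ℕ × ℕ => ((p.1 : ℤ), (p.2 : ℤ)))) := by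
    ext ⟨x, y⟩
    rw [hint]
    simp only [Set.mem_setOf_eq, latPt, Finset.coe_image, Set.mem_image,
      Finset.mem_coe, Finset.mem_filter, Finset.mem_product, Finset.mem_range]
    constructor
    · rintro ⟨hx, hy, h3, h4⟩
      have hx' : (0:ℤ) < x := by exact_mod_cast hx
      have hy' : (0:ℤ) < y := by exact_mod_cast hy
      have h3' : y + (M:ℤ) < D := by exact_mod_cast (by linarith : (y:ℝ) + M < D)
      have h4' : x + y < (D:ℤ) := by exact_mod_cast h4
      refine ⟨(x.toNat, y.toNat), ⟨⟨by omega, by omega⟩, by omega, by omega, by omega⟩, ?_⟩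
      simp only [Prod.mk.injEq]
      constructor <;> [rw [Int.toNat_of_nonneg (by omega)]; rw [Int.toNat_of_nonneg (by omega)]]
    · rintro ⟨⟨a, b⟩, ⟨⟨ha, hb⟩, h1, h2, hc, hd⟩, heq⟩
      dsimp only at *
      simp only [Prod.mk.injEq] at heq
      obtain ⟨rfl, rfl⟩ := heq
      have hc' : (b:ℝ) + M + 1 ≤ D := by exact_mod_cast hc
      have hd' : (a:ℝ) + b + 1 ≤ D := by exact_mod_cast hd
      have h1' : (1:ℝ) ≤ a := by exact_mod_cast h1
      have h2' : (1:ℝ) ≤ b := by exact_mod_cast h2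
      refine ⟨?_, ?_, ?_, ?_⟩ <;> push_cast <;> linarith
  rw [hset, Set.ncard_coe_finset, Finset.card_image_of_injective _ gInj]

/-- Lattice-point counts for the trapezoids `T(d,m)`:
`#(2·T(d,m)) = C(2d+2,2) − C(2m+1,2)`, and
`#((T(d₁,m₁)+T(d₂,m₂))°) = C(d₁+d₂−1,2) − C(m₁+m₂,2)`. -/
theorem stmt_13 :
    (∀ d m : ℕ, m ≤ d →
      latCount ((2 : ℝ) • trap d m) =
        Nat.choose (2 * d + 2) 2 - Nat.choose (2 * m + 1) 2) ∧
    (∀ d₁ m₁ d₂ m₂ : ℕ, m₁ ≤ d₁ → m₂ ≤ d₂ → m₁ + m₂ ≤ d₁ + d₂ →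
      latCount (interior (trap d₁ m₁ + trap d₂ m₂)) =
        Nat.choose (d₁ + d₂ - 1) 2 - Nat.choose (m₁ + m₂) 2) := by
  constructor
  · intro d m hm
    rw [smul_trap, latCount_trap (2*d) (2*m) (by omega), countA (2*d) (2*m) (by omega)]
  · intro d₁ m₁ d₂ m₂ h1 h2 h3
    rw [trap_add d₁ m₁ d₂ m₂ h1 h2,
      latCount_interior_trap (d₁+d₂) (m₁+m₂) h3 (interior_trap _ _),
      countB (d₁+d₂) (m₁+m₂) h3]
end

section
/- Let a₁ > 0 and c be real numbers and let Λ(d) = 2 a₁ d − c. Fix a positive integer t and suppose kⱼ (1 ≤ j ≤ t) are positive reals with kⱼ + 1 ≤ √Λ(d)/(2j) and kⱼ ≥ √Λ(d)/(2(j+1)), and set mⱼ = k₁ + ⋯ + kⱼ. Then for each 1 ≤ j ≤ t: (2 m_{j−1} + kⱼ)(kⱼ + 1) < ((j−1)/(2j) + 1/(4j²)) Λ(d) < Λ(d), where m₀ = 0. -/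
/-- Key numerical estimate in the proof of Theorem D: with `Λ(d) = 2a₁d − c > 0`,
positive reals `kⱼ` satisfying `√Λ(d)/(2(j+1)) ≤ kⱼ` and `kⱼ + 1 ≤ √Λ(d)/(2j)`,
and partial sums `mⱼ = k₁ + ⋯ + kⱼ`, one has for each `1 ≤ j ≤ t` that
`(2m_{j−1} + kⱼ)(kⱼ + 1) < ((j−1)/(2j) + 1/(4j²))Λ(d) < Λ(d)`. -/
theorem stmt_16 (a₁ c d : ℝ) (ha₁ : 0 < a₁) (t : ℕ) (ht : 0 < t)
    (Λ : ℝ) (hΛdef : Λ = 2 * a₁ * d - c) (hΛpos : 0 < Λ)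
    (k : ℕ → ℝ) (hkpos : ∀ j ∈ Finset.Icc 1 t, 0 < k j)
    (hkub : ∀ j ∈ Finset.Icc 1 t, k j + 1 ≤ Real.sqrt Λ / (2 * j))
    (hklb : ∀ j ∈ Finset.Icc 1 t, Real.sqrt Λ / (2 * (j + 1)) ≤ k j)
    (m : ℕ → ℝ) (hm : ∀ j, m j = ∑ i ∈ Finset.Icc 1 j, k i) :
    ∀ j ∈ Finset.Icc 1 t,
      (2 * m (j - 1) + k j) * (k j + 1) < (((j : ℝ) - 1) / (2 * j) + 1 / (4 * j ^ 2)) * Λ ∧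
      (((j : ℝ) - 1) / (2 * j) + 1 / (4 * j ^ 2)) * Λ < Λ := by
  intro j hj
  obtain ⟨hj1, hjt⟩ := Finset.mem_Icc.mp hj
  set s := Real.sqrt Λ with hs
  have hspos : 0 < s := Real.sqrt_pos.mpr hΛpos
  have hs2 : s ^ 2 = Λ := Real.sq_sqrt hΛpos.le
  have hjR : (1:ℝ) ≤ (j:ℝ) := by exact_mod_cast hj1
  have hjpos : (0:ℝ) < (j:ℝ) := by linarith
  have hkj := hkpos j hj
  have hkjub := hkub j hj
  have hkjlt : k j < s / (2 * j) := by linarith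
  have hkj1pos : (0:ℝ) < k j + 1 := by linarith
  -- bound on m (j-1)
  have hmle : m (j - 1) ≤ ((j:ℝ) - 1) * (s / 2) := by
    rw [hm]
    have hsum : ∑ i ∈ Finset.Icc 1 (j - 1), k i ≤ ∑ _i ∈ Finset.Icc 1 (j - 1), (s / 2) := by
      apply Finset.sum_le_sum
      intro i hi
      obtain ⟨hi1, hi2⟩ := Finset.mem_Icc.mp hi
      have hit : i ∈ Finset.Icc 1 t :=
        Finset.mem_Icc.mpr ⟨hi1, le_trans (hi2.trans (Nat.sub_le j 1)) hjt⟩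
      have hub := hkub i hit
      have hiR : (1:ℝ) ≤ (i:ℝ) := by exact_mod_cast hi1
      have hle : s / (2 * i) ≤ s / 2 := by
        apply div_le_div_of_nonneg_left hspos.le (by norm_num)
        linarith
      linarith
    have hcard : ((Finset.Icc 1 (j - 1)).card : ℝ) = (j:ℝ) - 1 := by
      rw [Nat.card_Icc]
      have : j - 1 + 1 - 1 = j - 1 := by omega
      rw [this, Nat.cast_sub hj1]
      norm_num
    calc ∑ i ∈ Finset.Icc 1 (j - 1), k i ≤ ∑ _i ∈ Finset.Icc 1 (j - 1), (s / 2) := hsum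
      _ = ((Finset.Icc 1 (j - 1)).card : ℝ) * (s / 2) := by
          rw [Finset.sum_const, nsmul_eq_mul]
      _ = ((j:ℝ) - 1) * (s / 2) := by rw [hcard]
  have h1 : (2 * m (j - 1) + k j) * (k j + 1)
      < (((j:ℝ) - 1) * s + s / (2 * j)) * (k j + 1) := by
    apply mul_lt_mul_of_pos_right _ hkj1pos
    linarith
  have hApos : (0:ℝ) ≤ ((j:ℝ) - 1) * s + s / (2 * j) := by
    have : (0:ℝ) < s / (2 * j) := by positivity
    nlinarith
  have h2 : (((j:ℝ) - 1) * s + s / (2 * j)) * (k j + 1)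
      ≤ (((j:ℝ) - 1) * s + s / (2 * j)) * (s / (2 * j)) :=
    mul_le_mul_of_nonneg_left hkjub hApos
  have heq : (((j:ℝ) - 1) * s + s / (2 * j)) * (s / (2 * j))
      = (((j : ℝ) - 1) / (2 * j) + 1 / (4 * j ^ 2)) * Λ := by
    rw [← hs2]
    field_simp
    ring
  have hcoeff : ((j:ℝ) - 1) / (2 * j) + 1 / (4 * j ^ 2) < 1 := by
    rw [div_add_div _ _ (by positivity) (by positivity), div_lt_one (by positivity)]
    nlinarith
  constructor
  · calc (2 * m (j - 1) + k j) * (k j + 1)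
        < (((j:ℝ) - 1) * s + s / (2 * j)) * (k j + 1) := h1
      _ ≤ (((j:ℝ) - 1) * s + s / (2 * j)) * (s / (2 * j)) := h2
      _ = (((j : ℝ) - 1) / (2 * j) + 1 / (4 * j ^ 2)) * Λ := heq
  · nlinarith
end
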